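/- Every dg module M over a dg algebra A admits a semi-free resolution: there exists a semi-free dg A-module F together with a surjective quasi-isomorphism of dg A-modules f : F → M. -/

import Mathlib

/-!
STATEMENT 10: Every dg module `M` over a dg algebra `A` admits a semi-free resolution:
there is a semi-free dg `A`-module `F` together with a surjective quasi-isomorphism of
dg `A`-modules `f : F → M`.
-/

/-- A (left) dg module over the dg algebra `(A, 𝒜, dA)`. -/
structure DGMod (k A : Type) [CommRing k] [Ring A] [Algebra k A]
    (𝒜 : ℤ → Submodule k A) (dA : A →ₗ[k] A) where
  carrier : Type
  [acg : AddCommGroup carrier]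
  [modk : Module k carrier]
  [modA : Module A carrier]
  [tower : IsScalarTower k A carrier]
  grading : ℤ → Submodule k carrier
  [decomp : DirectSum.Decomposition grading]
  smul_mem : ∀ (i j : ℤ) (a : A) (m : carrier),
    a ∈ 𝒜 i → m ∈ grading j → a • m ∈ grading (i + j)
  d : carrier →ₗ[k] carrier
  d_mem : ∀ i : ℤ, ∀ m ∈ grading i, d m ∈ grading (i + 1)
  d_sq : ∀ m, d (d m) = 0
  leibniz : ∀ (i : ℤ) (a : A) (m : carrier), a ∈ 𝒜 i →
    d (a • m) = dA a • m + (Int.negOnePow i) • (a • d m)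

attribute [instance] DGMod.acg DGMod.modk DGMod.modA DGMod.tower DGMod.decomp

/-- A dg `A`-module is semi-free iff it admits a homogeneous `A`-basis `(b_i)` together
with an `ℕ`-valued weight such that `d b_i` lies in the `A`-span of the basis elements of
strictly smaller weight (equivalently, it admits an exhaustive filtration by dg
submodules with free subquotients). -/
def DGMod.IsSemiFree {k A : Type} [CommRing k] [Ring A] [Algebra k A]
    {𝒜 : ℤ → Submodule k A} {dA : A →ₗ[k] A} (F : DGMod k A 𝒜 dA) : Prop :=
  ∃ (ι : Type) (B : Module.Basis ι A F.carrier) (g : ι → ℤ) (w : ι → ℕ),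
    (∀ i, B i ∈ F.grading (g i)) ∧
    (∀ i, F.d (B i) ∈ Submodule.span A (⇑B '' {j | w j < w i}))

/-!
`F` is free on generators built in stages. A generator of stage `n` is a triple `(i, w, y)` with
`w` a chain on the generators of earlier stages and `y ∈ M`; it is admissible when `w` is a cycle
of degree `i + 1`, `y` has degree `i` and `f w = d y`, and then `d` sends it to `w` and `f` to `y`.
So every cycle of `F` whose image is a boundary `d y` is itself a boundary (injectivity on
cohomology), stage `0` consists of cycles mapping onto the cycles of `M` (surjectivity on
cohomology), and killing the generator of `d m` by one mapped to `m` gives surjectivity. The stage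
is the weight witnessing semi-freeness.
-/

namespace SemiFree

open DirectSum

section Sign

variable {k M : Type} [CommRing k] [AddCommGroup M] [Module k M] (ℳ : ℤ → Submodule k M)
  [Decomposition ℳ]

/-- The parity involution, `(-1)^i` on degree `i`; it makes the sign of the Leibniz rule linear
in the scalar. -/
noncomputable def sign : M →ₗ[k] M :=
  toModule k ℤ M (fun i => (Int.negOnePow i : ℤ) • (ℳ i).subtype) ∘ₗ
    (decomposeLinearEquiv ℳ).toLinearMap

variable {ℳ}

theorem sign_of_mem {i : ℤ} {m : M} (hm : m ∈ ℳ i) : sign ℳ m = (Int.negOnePow i : ℤ) • m := by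
  simp [sign, decomposeLinearEquiv_apply, decompose_of_mem ℳ hm, ← lof_eq_of k]

theorem sign_mem {i : ℤ} {m : M} (hm : m ∈ ℳ i) : sign ℳ m ∈ ℳ i := by
  rw [sign_of_mem hm]
  exact zsmul_mem hm _

variable {A : Type} [Ring A] [Algebra k A] (𝒜 : ℤ → Submodule k A) [GradedAlgebra 𝒜]

theorem sign_one : sign 𝒜 1 = 1 := by
  simp [sign_of_mem (SetLike.one_mem_graded 𝒜)]

theorem sign_mul (a b : A) : sign 𝒜 (a * b) = sign 𝒜 a * sign 𝒜 b := by
  induction a using Decomposition.inductionOn 𝒜 with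
  | zero => simp
  | add x y hx hy => rw [add_mul, map_add, map_add, add_mul, hx, hy]
  | @homogeneous i a =>
    induction b using Decomposition.inductionOn 𝒜 with
    | zero => simp
    | add x y hx hy => rw [mul_add, map_add, map_add, mul_add, hx, hy]
    | @homogeneous j b =>
      rw [sign_of_mem a.2, sign_of_mem b.2, sign_of_mem (SetLike.mul_mem_graded a.2 b.2),
        Int.negOnePow_add]
      simp only [Units.val_mul, mul_smul, smul_mul_smul_comm]

variable {𝒜} {dA : A →ₗ[k] A}

theorem sign_dA (hdAdeg : ∀ i : ℤ, ∀ x ∈ 𝒜 i, dA x ∈ 𝒜 (i + 1)) (a : A) :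
    sign 𝒜 (dA a) = -dA (sign 𝒜 a) := by
  induction a using Decomposition.inductionOn 𝒜 with
  | zero => simp
  | add x y hx hy => simp only [map_add, hx, hy, neg_add]
  | @homogeneous i a =>
    rw [sign_of_mem (hdAdeg i a a.2), sign_of_mem a.2, map_zsmul, Int.negOnePow_succ,
      Units.val_neg, neg_smul]

theorem dA_mul (hdAleib : ∀ i : ℤ, ∀ x ∈ 𝒜 i, ∀ y : A,
      dA (x * y) = dA x * y + (Int.negOnePow i) • (x * dA y)) (a b : A) :
    dA (a * b) = dA a * b + sign 𝒜 a * dA b := by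
  induction a using Decomposition.inductionOn 𝒜 with
  | zero => simp
  | add x y hx hy =>
    simp only [add_mul, map_add, hx, hy]
    abel
  | @homogeneous i a =>
    rw [hdAleib i a a.2 b, sign_of_mem a.2, smul_mul_assoc, Units.smul_def]

theorem dA_one (hdAleib : ∀ i : ℤ, ∀ x ∈ 𝒜 i, ∀ y : A,
      dA (x * y) = dA x * y + (Int.negOnePow i) • (x * dA y)) : dA (1 : A) = 0 := by
  simpa using hdAleib 0 1 (SetLike.one_mem_graded 𝒜) 1

end Sign

end SemiFree

namespace DGMod

open DirectSum SemiFree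

variable {k A : Type} [CommRing k] [Ring A] [Algebra k A] {𝒜 : ℤ → Submodule k A}
  {dA : A →ₗ[k] A} (M : DGMod k A 𝒜 dA)

theorem decompose_d (m : M.carrier) (i : ℤ) :
    (decompose M.grading (M.d m) i : M.carrier) = M.d (decompose M.grading m (i - 1)) := by
  induction m using Decomposition.inductionOn M.grading with
  | zero => simp
  | add x y hx hy =>
    simp only [map_add, decompose_add, DirectSum.add_apply, Submodule.coe_add, hx, hy]
  | @homogeneous p m =>
    have hdm := M.d_mem p m m.2
    by_cases h : i = p + 1
    · subst h
      rw [decompose_of_mem_same _ hdm, add_sub_cancel_right, decompose_coe, of_eq_same]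
    · rw [decompose_of_mem_ne _ hdm (Ne.symm h), decompose_coe, of_eq_of_ne _ _ _ (by omega),
        ZeroMemClass.coe_zero, map_zero]

variable [GradedAlgebra 𝒜]

theorem d_smul (a : A) (m : M.carrier) : M.d (a • m) = dA a • m + sign 𝒜 a • M.d m := by
  induction a using Decomposition.inductionOn 𝒜 with
  | zero => simp
  | add x y hx hy =>
    simp only [add_smul, map_add, hx, hy]
    abel
  | @homogeneous i a =>
    rw [M.leibniz i a m a.2, sign_of_mem a.2, smul_assoc, Units.smul_def]

end DGMod

namespace SemiFree

open DirectSum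

section FreeGraded

variable {k A : Type} [CommRing k] [Ring A] [Algebra k A] (𝒜 : ℤ → Submodule k A)
  {ι : Type} (g : ι → ℤ)

noncomputable def freeGrading (n : ℤ) : Submodule k (ι →₀ A) :=
  ⨅ j, (𝒜 (n - g j)).comap (Finsupp.lapply j)

variable {𝒜 g}

theorem mem_freeGrading {v : ι →₀ A} {n : ℤ} :
    v ∈ freeGrading 𝒜 g n ↔ ∀ j, v j ∈ 𝒜 (n - g j) := by
  simp [freeGrading, Submodule.mem_iInf]

theorem single_mem_freeGrading {a : A} {n : ℤ} {j : ι} (h : a ∈ 𝒜 (n - g j)) :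
    Finsupp.single j a ∈ freeGrading 𝒜 g n := by
  refine mem_freeGrading.2 fun j' => ?_
  rcases eq_or_ne j j' with rfl | hne
  · rwa [Finsupp.single_eq_same]
  · rw [Finsupp.single_eq_of_ne' hne]
    exact zero_mem _

theorem of_freeGrading_congr {n n' : ℤ} (h : n = n') {v : freeGrading 𝒜 g n}
    {v' : freeGrading 𝒜 g n'} (hv : (v : ι →₀ A) = v') :
    of (fun n => freeGrading 𝒜 g n) n v = of (fun n => freeGrading 𝒜 g n) n' v' := by
  subst h
  rw [Subtype.ext hv]

theorem linearCombination_mem {dA : A →ₗ[k] A} (M : DGMod k A 𝒜 dA) {f : ι → M.carrier}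
    (hf : ∀ j, f j ∈ M.grading (g j)) {v : ι →₀ A} {n : ℤ} (hv : v ∈ freeGrading 𝒜 g n) :
    Finsupp.linearCombination A f v ∈ M.grading n := by
  rw [Finsupp.linearCombination_apply]
  refine Submodule.finsuppSum_mem _ _ _ _ fun j _ => ?_
  have := M.smul_mem _ _ _ _ (mem_freeGrading.1 hv j) (hf j)
  rwa [sub_add_cancel] at this

variable [GradedAlgebra 𝒜]

theorem single_one_mem_freeGrading (j : ι) : Finsupp.single j (1 : A) ∈ freeGrading 𝒜 g (g j) :=
  single_mem_freeGrading (by rw [sub_self]; exact SetLike.one_mem_graded 𝒜)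

theorem smul_mem_freeGrading {a : A} {v : ι →₀ A} {p q : ℤ} (ha : a ∈ 𝒜 p)
    (hv : v ∈ freeGrading 𝒜 g q) : a • v ∈ freeGrading 𝒜 g (p + q) := by
  refine mem_freeGrading.2 fun j => ?_
  rw [Finsupp.smul_apply, smul_eq_mul, add_sub_assoc]
  exact SetLike.mul_mem_graded ha (mem_freeGrading.1 hv j)

variable (𝒜 g)

noncomputable def singleGraded (j : ι) (i : ℤ) : 𝒜 i →+ freeGrading 𝒜 g (i + g j) where
  toFun a := ⟨Finsupp.single j a, single_mem_freeGrading (by rw [add_sub_cancel_right]; exact a.2)⟩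
  map_zero' := by ext : 1; simp
  map_add' a b := by ext : 1; simp

noncomputable def decomposeFree : (ι →₀ A) →+ ⨁ n, freeGrading 𝒜 g n :=
  Finsupp.liftAddHom fun j =>
    (toAddMonoid fun i => (of (fun n => freeGrading 𝒜 g n) (i + g j)).comp
      (singleGraded 𝒜 g j i)).comp (decomposeAddEquiv 𝒜).toAddMonoidHom

variable {𝒜 g}

theorem decomposeFree_single (j : ι) {n : ℤ} {a : A} (ha : a ∈ 𝒜 (n - g j)) :
    decomposeFree 𝒜 g (Finsupp.single j a) =
      of (fun n => freeGrading 𝒜 g n) n ⟨Finsupp.single j a, single_mem_freeGrading ha⟩ := by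
  rw [decomposeFree, Finsupp.liftAddHom_apply_single]
  simp only [AddMonoidHom.comp_apply, AddEquiv.toAddMonoidHom_eq_coe, AddMonoidHom.coe_coe]
  rw [show decomposeAddEquiv 𝒜 a = decompose 𝒜 a from rfl, decompose_of_mem 𝒜 ha,
    toAddMonoid_of]
  exact of_freeGrading_congr (sub_add_cancel n (g j)) rfl

noncomputable instance : Decomposition (freeGrading 𝒜 g) :=
  Decomposition.ofAddHom _ (decomposeFree 𝒜 g)
    (by
      ext j a : 2
      simp only [AddMonoidHom.comp_apply, AddMonoidHom.id_apply, Finsupp.singleAddHom_apply]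
      induction a using Decomposition.inductionOn 𝒜 with
      | zero => simp
      | add x y hx hy => rw [Finsupp.single_add, map_add, map_add, hx, hy]
      | @homogeneous i a =>
        have ha : (a : A) ∈ 𝒜 (i + g j - g j) := by rw [add_sub_cancel_right]; exact a.2
        rw [decomposeFree_single j ha, coeAddMonoidHom_of])
    (by
      ext n ⟨v, hv⟩ : 2
      simp only [AddMonoidHom.comp_apply, coeAddMonoidHom_of, AddMonoidHom.id_apply]
      conv_lhs => rw [← v.sum_single]
      rw [Finsupp.sum, map_sum, Finset.sum_congr rfl fun j _ =>
        decomposeFree_single j (mem_freeGrading.1 hv j), ← map_sum]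
      congr 1
      ext : 1
      simp only [AddSubmonoidClass.coe_finsetSum]
      exact v.sum_single)

end FreeGraded

section FreeDG

variable {k A : Type} [CommRing k] [Ring A] [Algebra k A] (𝒜 : ℤ → Submodule k A)
  [GradedAlgebra 𝒜] (dA : A →ₗ[k] A) {ι : Type}

noncomputable def freeD (D : ι → ι →₀ A) : (ι →₀ A) →ₗ[k] (ι →₀ A) :=
  Finsupp.lsum k fun j => Finsupp.lsingle j ∘ₗ dA + (sign 𝒜).smulRight (D j)

variable {𝒜 dA} {D : ι → ι →₀ A}

theorem freeD_single (j : ι) (a : A) :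
    freeD 𝒜 dA D (Finsupp.single j a) = Finsupp.single j (dA a) + sign 𝒜 a • D j := by
  simp [freeD]

theorem freeD_congr {D' : ι → ι →₀ A} {v : ι →₀ A} (h : ∀ j ∈ v.support, D j = D' j) :
    freeD 𝒜 dA D v = freeD 𝒜 dA D' v := by
  simp only [freeD, Finsupp.lsum_apply]
  exact Finsupp.sum_congr fun j hj => by rw [h j hj]

variable (hdAdeg : ∀ i : ℤ, ∀ x ∈ 𝒜 i, dA x ∈ 𝒜 (i + 1)) (hdAsq : ∀ x : A, dA (dA x) = 0)
  (hdAleib : ∀ i : ℤ, ∀ x ∈ 𝒜 i, ∀ y : A,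
    dA (x * y) = dA x * y + (Int.negOnePow i) • (x * dA y))

include hdAleib in
theorem freeD_smul (a : A) (v : ι →₀ A) :
    freeD 𝒜 dA D (a • v) = dA a • v + sign 𝒜 a • freeD 𝒜 dA D v := by
  induction v using Finsupp.induction_linear with
  | zero => simp
  | add v w hv hw =>
    simp only [smul_add, map_add, hv, hw]
    abel
  | single j b =>
    rw [Finsupp.smul_single', freeD_single, freeD_single, dA_mul hdAleib, sign_mul,
      Finsupp.single_add, smul_add, Finsupp.smul_single', Finsupp.smul_single', mul_smul]
    abel

include hdAdeg hdAsq hdAleib in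
theorem freeD_freeD (hD : ∀ j, freeD 𝒜 dA D (D j) = 0) (v : ι →₀ A) :
    freeD 𝒜 dA D (freeD 𝒜 dA D v) = 0 := by
  induction v using Finsupp.induction_linear with
  | zero => simp
  | add v w hv hw => rw [map_add, map_add, hv, hw, add_zero]
  | single j b =>
    rw [freeD_single, map_add, freeD_smul hdAleib, freeD_single, hD, smul_zero, add_zero,
      hdAsq, Finsupp.single_zero, zero_add, sign_dA hdAdeg, neg_smul, neg_add_cancel]

include hdAleib in
theorem freeD_single_one (j : ι) : freeD 𝒜 dA D (Finsupp.single j 1) = D j := by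
  rw [freeD_single, dA_one hdAleib, Finsupp.single_zero, zero_add, sign_one, one_smul]

variable {g : ι → ℤ}

include hdAdeg in
theorem freeD_mem (hD : ∀ j, D j ∈ freeGrading 𝒜 g (g j + 1)) {v : ι →₀ A} {n : ℤ}
    (hv : v ∈ freeGrading 𝒜 g n) : freeD 𝒜 dA D v ∈ freeGrading 𝒜 g (n + 1) := by
  rw [freeD, Finsupp.lsum_apply]
  refine Submodule.finsuppSum_mem _ _ _ _ fun j _ => add_mem ?_ ?_
  · refine single_mem_freeGrading ?_
    rw [add_sub_right_comm]
    exact hdAdeg _ _ (mem_freeGrading.1 hv j)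
  · rw [LinearMap.smulRight_apply]
    convert smul_mem_freeGrading (sign_mem (mem_freeGrading.1 hv j)) (hD j) using 2
    ring

variable (M : DGMod k A 𝒜 dA) {f : ι → M.carrier}

theorem linearCombination_freeD (hf : ∀ j, Finsupp.linearCombination A f (D j) = M.d (f j))
    (v : ι →₀ A) :
    Finsupp.linearCombination A f (freeD 𝒜 dA D v) =
      M.d (Finsupp.linearCombination A f v) := by
  induction v using Finsupp.induction_linear with
  | zero => simp
  | add v w hv hw => simp only [map_add, hv, hw]
  | single j b =>
    rw [freeD_single, map_add, map_smul, hf, Finsupp.linearCombination_single,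
      Finsupp.linearCombination_single, M.d_smul]

variable (D)

noncomputable def freeDGMod (hD_mem : ∀ j, D j ∈ freeGrading 𝒜 g (g j + 1))
    (hD_sq : ∀ j, freeD 𝒜 dA D (D j) = 0) : DGMod k A 𝒜 dA where
  carrier := ι →₀ A
  grading := freeGrading 𝒜 g
  smul_mem _ _ _ _ ha hm := smul_mem_freeGrading ha hm
  d := freeD 𝒜 dA D
  d_mem _ _ hm := freeD_mem hdAdeg hD_mem hm
  d_sq := freeD_freeD hdAdeg hdAsq hdAleib hD_sq
  leibniz i a m ha := by
    rw [freeD_smul hdAleib, sign_of_mem ha, smul_assoc, Units.smul_def]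

theorem freeDGMod_isSemiFree (hD_mem : ∀ j, D j ∈ freeGrading 𝒜 g (g j + 1))
    (hD_sq : ∀ j, freeD 𝒜 dA D (D j) = 0) (w : ι → ℕ)
    (hw : ∀ j, ∀ j' ∈ (D j).support, w j' < w j) :
    (freeDGMod D hdAdeg hdAsq hdAleib hD_mem hD_sq).IsSemiFree := by
  refine ⟨ι, Finsupp.basisSingleOne, g, w, fun j => ?_, fun j => ?_⟩
  · exact single_one_mem_freeGrading j
  · change freeD 𝒜 dA D (Finsupp.single j 1) ∈
      Submodule.span A ((fun i => Finsupp.single i (1 : A)) '' {j' | w j' < w j})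
    rw [freeD_single_one hdAleib, ← Finsupp.supported_eq_span_single, Finsupp.mem_supported]
    exact hw j

end FreeDG

section Generators

variable (A M : Type) [Zero A]

/-- The generators of the stages `< n`; one of stage `n` is a triple (degree, chain on the
earlier generators, target in `M`). -/
def Earlier : ℕ → Type
  | 0 => Empty
  | n + 1 => Earlier n ⊕ (ℤ × (Earlier n →₀ A) × M)

def Gen : Type := Σ n, ℤ × (Earlier A M n →₀ A) × M

variable {A M}

def Earlier.toGen : (n : ℕ) → Earlier A M n → Gen A M
  | 0, e => nomatch e
  | n + 1, .inl e => toGen n e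
  | n + 1, .inr t => ⟨n, t⟩

theorem Earlier.toGen_fst_lt : ∀ (n : ℕ) (e : Earlier A M n), (toGen n e).1 < n
  | n + 1, .inl e => Nat.lt_succ_of_lt (toGen_fst_lt n e)
  | n + 1, .inr _ => Nat.lt_succ_self n

theorem Earlier.toGen_injective : ∀ n : ℕ, Function.Injective (toGen (A := A) (M := M) n)
  | 0, e, _, _ => nomatch e
  | n + 1, .inl _, .inl _, h => congrArg Sum.inl (toGen_injective n h)
  | n + 1, .inl e, .inr _, h => absurd (congrArg Sigma.fst h) (toGen_fst_lt n e).ne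
  | n + 1, .inr _, .inl e', h => absurd (congrArg Sigma.fst h) (toGen_fst_lt n e').ne'
  | _ + 1, .inr _, .inr _, h => congrArg Sum.inr (eq_of_heq (Sigma.mk.inj h).2)

theorem Earlier.exists_toGen_eq : ∀ (n : ℕ) (j : Gen A M), j.1 < n → ∃ e, toGen n e = j
  | n + 1, j, hj => by
    rcases (Nat.lt_succ_iff_lt_or_eq.1 hj) with hlt | heq
    · obtain ⟨e, he⟩ := exists_toGen_eq n j hlt
      exact ⟨.inl e, he⟩
    · obtain ⟨m, t⟩ := j
      subst heq
      exact ⟨.inr t, rfl⟩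

def Earlier.embedding (n : ℕ) : Earlier A M n ↪ Gen A M := ⟨toGen n, toGen_injective n⟩

def Gen.deg (j : Gen A M) : ℤ := j.2.1

def Gen.target (j : Gen A M) : M := j.2.2.2

noncomputable def Gen.boundary (j : Gen A M) : Gen A M →₀ A :=
  j.2.2.1.embDomain (Earlier.embedding j.1)

theorem Gen.fst_lt_of_mem_support_boundary {j j' : Gen A M} (h : j' ∈ j.boundary.support) :
    j'.1 < j.1 := by
  rw [boundary, Finsupp.support_embDomain, Finset.mem_map] at h
  obtain ⟨e, -, rfl⟩ := h
  exact Earlier.toGen_fst_lt _ e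

theorem Gen.exists_boundary_eq (v : Gen A M →₀ A) (i : ℤ) (y : M) :
    ∃ j : Gen A M, j.deg = i ∧ j.target = y ∧ j.boundary = v := by
  set N := v.support.sup (·.1) + 1
  have hv : ↑v.support ⊆ Set.range (Earlier.embedding (A := A) (M := M) N) := fun j hj =>
    Earlier.exists_toGen_eq N j (Nat.lt_succ_of_le (Finset.le_sup (f := (·.1)) hj))
  exact ⟨⟨N, i, v.comapDomain _ (Earlier.embedding N).injective.injOn, y⟩, rfl, rfl,
    Finsupp.embDomain_comapDomain hv⟩

end Generators

section Construction

variable {k A : Type} [CommRing k] [Ring A] [Algebra k A] (𝒜 : ℤ → Submodule k A)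
  [GradedAlgebra 𝒜] (dA : A →ₗ[k] A) (M : DGMod k A 𝒜 dA)

def Gen.IsAdmissible (D : Gen A M.carrier → Gen A M.carrier →₀ A) (f : Gen A M.carrier → M.carrier)
    (j : Gen A M.carrier) : Prop :=
  j.boundary ∈ freeGrading 𝒜 Gen.deg (j.deg + 1) ∧ freeD 𝒜 dA D j.boundary = 0 ∧
    j.target ∈ M.grading j.deg ∧ Finsupp.linearCombination A f j.boundary = M.d j.target

open Classical in
/-- A generator that is not admissible becomes a cycle mapping to `0`. -/
noncomputable def genData (j : Gen A M.carrier) : (Gen A M.carrier →₀ A) × M.carrier :=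
  if Gen.IsAdmissible 𝒜 dA M
      (fun j' => if _ : j'.1 < j.1 then (genData j').1 else 0)
      (fun j' => if _ : j'.1 < j.1 then (genData j').2 else 0) j
  then (j.boundary, j.target) else 0
termination_by j.1

noncomputable def genD (j : Gen A M.carrier) : Gen A M.carrier →₀ A := (genData 𝒜 dA M j).1

noncomputable def genF (j : Gen A M.carrier) : M.carrier := (genData 𝒜 dA M j).2

variable {𝒜 dA M}

theorem Gen.isAdmissible_congr {D D' : Gen A M.carrier → Gen A M.carrier →₀ A}
    {f f' : Gen A M.carrier → M.carrier} {j : Gen A M.carrier}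
    (h : ∀ j' ∈ j.boundary.support, D j' = D' j' ∧ f j' = f' j') :
    j.IsAdmissible 𝒜 dA M D f ↔ j.IsAdmissible 𝒜 dA M D' f' := by
  have hf : Finsupp.linearCombination A f j.boundary = Finsupp.linearCombination A f' j.boundary :=
    Finsupp.sum_congr fun j' hj' => by simp [(h j' hj').2]
  rw [IsAdmissible, IsAdmissible, freeD_congr fun j' hj' => (h j' hj').1, hf]

theorem genData_cases (j : Gen A M.carrier) :
    (genD 𝒜 dA M j = j.boundary ∧ genF 𝒜 dA M j = j.target ∧
      j.IsAdmissible 𝒜 dA M (genD 𝒜 dA M) (genF 𝒜 dA M)) ∨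
    (genD 𝒜 dA M j = 0 ∧ genF 𝒜 dA M j = 0 ∧
      ¬j.IsAdmissible 𝒜 dA M (genD 𝒜 dA M) (genF 𝒜 dA M)) := by
  have hcongr := Gen.isAdmissible_congr (𝒜 := 𝒜) (dA := dA) (M := M) (j := j)
    (D := fun j' => if _ : j'.1 < j.1 then (genData 𝒜 dA M j').1 else 0)
    (f := fun j' => if _ : j'.1 < j.1 then (genData 𝒜 dA M j').2 else 0)
    (D' := genD 𝒜 dA M) (f' := genF 𝒜 dA M) fun j' hj' => by
      simp [Gen.fst_lt_of_mem_support_boundary hj', genD, genF]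
  unfold genD genF
  rw [genData]
  split_ifs with h
  · exact .inl ⟨rfl, rfl, hcongr.1 h⟩
  · exact .inr ⟨rfl, rfl, mt hcongr.2 h⟩

theorem genD_mem (j : Gen A M.carrier) :
    genD 𝒜 dA M j ∈ freeGrading 𝒜 Gen.deg (j.deg + 1) := by
  rcases genData_cases j with ⟨hD, -, h⟩ | ⟨hD, -, -⟩
  · exact hD ▸ h.1
  · exact hD ▸ zero_mem _

theorem genF_mem (j : Gen A M.carrier) : genF 𝒜 dA M j ∈ M.grading j.deg := by
  rcases genData_cases j with ⟨-, hF, h⟩ | ⟨-, hF, -⟩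
  · exact hF ▸ h.2.2.1
  · exact hF ▸ zero_mem _

theorem freeD_genD (j : Gen A M.carrier) : freeD 𝒜 dA (genD 𝒜 dA M) (genD 𝒜 dA M j) = 0 := by
  rcases genData_cases j with ⟨hD, -, h⟩ | ⟨hD, -, -⟩
  · exact hD ▸ h.2.1
  · rw [hD, map_zero]

theorem linearCombination_genD (j : Gen A M.carrier) :
    Finsupp.linearCombination A (genF 𝒜 dA M) (genD 𝒜 dA M j) = M.d (genF 𝒜 dA M j) := by
  rcases genData_cases j with ⟨hD, hF, h⟩ | ⟨hD, hF, -⟩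
  · rw [hD, hF, h.2.2.2]
  · rw [hD, hF, map_zero, map_zero]

theorem fst_lt_of_mem_support_genD {j j' : Gen A M.carrier} (h : j' ∈ (genD 𝒜 dA M j).support) :
    j'.1 < j.1 := by
  rcases genData_cases j with ⟨hD, -⟩ | ⟨hD, -, -⟩
  · exact Gen.fst_lt_of_mem_support_boundary (hD ▸ h)
  · simp [hD] at h

theorem exists_genD_eq {v : Gen A M.carrier →₀ A} {i : ℤ}
    (hv : v ∈ freeGrading 𝒜 Gen.deg (i + 1)) (hdv : freeD 𝒜 dA (genD 𝒜 dA M) v = 0)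
    {y : M.carrier} (hy : y ∈ M.grading i)
    (hvy : Finsupp.linearCombination A (genF 𝒜 dA M) v = M.d y) :
    ∃ j : Gen A M.carrier, j.deg = i ∧ genD 𝒜 dA M j = v ∧ genF 𝒜 dA M j = y := by
  obtain ⟨j, rfl, rfl, rfl⟩ := Gen.exists_boundary_eq v i y
  rcases genData_cases j with ⟨hD, hF, -⟩ | ⟨-, -, h⟩
  · exact ⟨j, rfl, hD, hF⟩
  · exact absurd ⟨hv, hdv, hy, hvy⟩ h

end Construction

section Resolution

variable {k A : Type} [CommRing k] [Ring A] [Algebra k A] (𝒜 : ℤ → Submodule k A)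
  [GradedAlgebra 𝒜] (dA : A →ₗ[k] A) (M : DGMod k A 𝒜 dA)
  (hdAdeg : ∀ i : ℤ, ∀ x ∈ 𝒜 i, dA x ∈ 𝒜 (i + 1)) (hdAsq : ∀ x : A, dA (dA x) = 0)
  (hdAleib : ∀ i : ℤ, ∀ x ∈ 𝒜 i, ∀ y : A,
    dA (x * y) = dA x * y + (Int.negOnePow i) • (x * dA y))

noncomputable def resolution : DGMod k A 𝒜 dA :=
  freeDGMod (genD 𝒜 dA M) hdAdeg hdAsq hdAleib genD_mem freeD_genD

theorem resolution_isSemiFree : (resolution 𝒜 dA M hdAdeg hdAsq hdAleib).IsSemiFree :=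
  freeDGMod_isSemiFree _ hdAdeg hdAsq hdAleib _ _ (·.1) fun _ _ => fst_lt_of_mem_support_genD

variable {𝒜 dA M}

include hdAleib in
theorem surjective_linearCombination_genF :
    Function.Surjective (Finsupp.linearCombination A (genF 𝒜 dA M)) := by
  intro m
  induction m using Decomposition.inductionOn M.grading with
  | zero => exact ⟨0, map_zero _⟩
  | add x y hx hy =>
    obtain ⟨a, rfl⟩ := hx
    obtain ⟨b, rfl⟩ := hy
    exact ⟨a + b, map_add _ a b⟩
  | @homogeneous i m =>
    obtain ⟨z, hz, hDz, hFz⟩ := exists_genD_eq (𝒜 := 𝒜) (M := M) (v := 0) (zero_mem _)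
      (map_zero _) (M.d_mem i m m.2) (by rw [map_zero, M.d_sq])
    obtain ⟨c, -, -, hFc⟩ := exists_genD_eq (v := Finsupp.single z 1)
      (hz ▸ single_one_mem_freeGrading z) (by rw [freeD_single_one hdAleib, hDz]) m.2
      (by rw [Finsupp.linearCombination_single, one_smul, hFz])
    exact ⟨Finsupp.single c 1, by rw [Finsupp.linearCombination_single, one_smul, hFc]⟩

include hdAleib in
theorem exists_cycle_linearCombination_genF_eq {i : ℤ} {m : M.carrier} (hm : m ∈ M.grading i)
    (hdm : M.d m = 0) :
    ∃ x ∈ freeGrading 𝒜 Gen.deg i, freeD 𝒜 dA (genD 𝒜 dA M) x = 0 ∧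
      ∃ y, Finsupp.linearCombination A (genF 𝒜 dA M) x = m + M.d y := by
  obtain ⟨j, hj, hD, hF⟩ := exists_genD_eq (𝒜 := 𝒜) (v := 0) (zero_mem _) (map_zero _) hm
    (by rw [map_zero, hdm])
  exact ⟨Finsupp.single j 1, hj ▸ single_one_mem_freeGrading j,
    (freeD_single_one hdAleib j).trans hD, 0,
    by rw [Finsupp.linearCombination_single, one_smul, hF, map_zero, add_zero]⟩

include hdAleib in
theorem exists_eq_freeD_of_linearCombination_genF_eq {i : ℤ} {x : Gen A M.carrier →₀ A}
    (hx : x ∈ freeGrading 𝒜 Gen.deg i) (hdx : freeD 𝒜 dA (genD 𝒜 dA M) x = 0) {y : M.carrier}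
    (hy : Finsupp.linearCombination A (genF 𝒜 dA M) x = M.d y) :
    ∃ z, x = freeD 𝒜 dA (genD 𝒜 dA M) z := by
  have hy' : Finsupp.linearCombination A (genF 𝒜 dA M) x =
      M.d (DirectSum.decompose M.grading y (i - 1)) := by
    rw [← M.decompose_d, ← hy,
      DirectSum.decompose_of_mem_same _ (linearCombination_mem M genF_mem hx)]
  obtain ⟨j, -, hD, -⟩ := exists_genD_eq (by rwa [sub_add_cancel]) hdx
    (DirectSum.decompose M.grading y (i - 1)).2 hy'
  exact ⟨Finsupp.single j 1, ((freeD_single_one hdAleib j).trans hD).symm⟩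

end Resolution

end SemiFree

theorem statement10 {k A : Type} [CommRing k] [Ring A] [Algebra k A]
    (𝒜 : ℤ → Submodule k A) [GradedAlgebra 𝒜]
    (dA : A →ₗ[k] A)
    (hdAdeg : ∀ i : ℤ, ∀ x ∈ 𝒜 i, dA x ∈ 𝒜 (i + 1))
    (hdAsq : ∀ x : A, dA (dA x) = 0)
    (hdAleib : ∀ i : ℤ, ∀ x ∈ 𝒜 i, ∀ y : A,
      dA (x * y) = dA x * y + (Int.negOnePow i) • (x * dA y))
    (M : DGMod k A 𝒜 dA) :
    ∃ (F : DGMod k A 𝒜 dA), F.IsSemiFree ∧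
      ∃ f : F.carrier →ₗ[A] M.carrier,
        -- `f` is a surjective morphism of dg `A`-modules of degree 0 ...
        Function.Surjective f ∧
        (∀ i : ℤ, ∀ x ∈ F.grading i, f x ∈ M.grading i) ∧
        (∀ x, f (F.d x) = M.d (f x)) ∧
        -- ... which is a quasi-isomorphism: surjective on cohomology ...
        (∀ i : ℤ, ∀ m ∈ M.grading i, M.d m = 0 →
          ∃ x ∈ F.grading i, F.d x = 0 ∧ ∃ y, f x = m + M.d y) ∧
        -- ... and injective on cohomology
        (∀ i : ℤ, ∀ x ∈ F.grading i, F.d x = 0 →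
          (∃ y, f x = M.d y) → ∃ z, x = F.d z) := by
  refine ⟨SemiFree.resolution 𝒜 dA M hdAdeg hdAsq hdAleib,
    SemiFree.resolution_isSemiFree 𝒜 dA M hdAdeg hdAsq hdAleib,
    Finsupp.linearCombination A (SemiFree.genF 𝒜 dA M),
    SemiFree.surjective_linearCombination_genF hdAleib,
    fun _ _ hx => SemiFree.linearCombination_mem M SemiFree.genF_mem hx,
    SemiFree.linearCombination_freeD M SemiFree.linearCombination_genD,
    fun _ _ hm hdm => SemiFree.exists_cycle_linearCombination_genF_eq hdAleib hm hdm,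
    fun _ _ hx hdx ⟨_, hy⟩ =>
      SemiFree.exists_eq_freeD_of_linearCombination_genF_eq hdAleib hx hdx hy⟩
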